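/- arXiv:2406.18109 — 4 statements merged into one kernel-verified Lean document; each statement's English description precedes it below -/
import Mathlib

section
/- Let [T₁, …, T_f] be a sequence of index tasks over a common launch domain D that satisfies the true-dependence constraint, the anti-dependence constraint, and the reduction constraint, and that is write-non-interfering. Then for all indices i < j, the tasks T_i and T_j are fusible; that is, for every p ∈ D, the dependence map satisfies 𝒟(T_i, T_j)[p] ⊆ {p}. -/
/-- Privileges of accesses: `readwrite` counts as both a Read and a Write access. -/
inductive Priv where
  | read | write | reduce | readwrite
  deriving DecidableEq

/-- A partition maps each point of a launch domain to a sub-store (a set of indices). -/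
abbrev IdxPartition (Point Idx : Type*) := Point → Set Idx

/-- An index task is a (finite) set of accesses `(S, P, pr)`. -/
abbrev IndexTask (Point Idx SId : Type*) := Set (SId × IdxPartition Point Idx × Priv)

variable {Point Idx SId : Type*}

/-- `T` reads store `S` via partition `P`. -/
def TRead (T : IndexTask Point Idx SId) (S : SId) (P : IdxPartition Point Idx) : Prop :=
  (S, P, Priv.read) ∈ T ∨ (S, P, Priv.readwrite) ∈ T

/-- `T` writes store `S` via partition `P`. -/
def TWrite (T : IndexTask Point Idx SId) (S : SId) (P : IdxPartition Point Idx) : Prop :=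
  (S, P, Priv.write) ∈ T ∨ (S, P, Priv.readwrite) ∈ T

/-- `T` reduces to store `S` via partition `P`. -/
def TReduce (T : IndexTask Point Idx SId) (S : SId) (P : IdxPartition Point Idx) : Prop :=
  (S, P, Priv.reduce) ∈ T

/-- `dep T₁ T₂ p p'`: the point task `T₂^{p'}` depends on the point task `T₁^p`. -/
def dep (T₁ T₂ : IndexTask Point Idx SId) (p p' : Point) : Prop :=
  ∃ (S : SId) (P P' : IdxPartition Point Idx),
    (P p ∩ P' p').Nonempty ∧
    ((TWrite T₁ S P ∧ (TRead T₂ S P' ∨ TWrite T₂ S P' ∨ TReduce T₂ S P')) ∨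
     (TRead T₁ S P ∧ (TWrite T₂ S P' ∨ TReduce T₂ S P')) ∨
     (TReduce T₁ S P ∧ (TRead T₂ S P' ∨ TWrite T₂ S P')))

/-- The dependence map `𝒟(T₁,T₂)[p] = {p' ∈ D : dep (T₁^p, T₂^{p'})}`. -/
def depMap (T₁ T₂ : IndexTask Point Idx SId) (D : Set Point) (p : Point) : Set Point :=
  {p' ∈ D | dep T₁ T₂ p p'}

/-- The true-dependence fusion constraint. -/
def TrueDepConstraint {n : ℕ} (T : Fin n → IndexTask Point Idx SId) : Prop :=
  ∀ (i : Fin n) (S : SId) (P : IdxPartition Point Idx), TWrite (T i) S P →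
    ¬ ∃ (j : Fin n) (P' : IdxPartition Point Idx),
        i < j ∧ P' ≠ P ∧ (TRead (T j) S P' ∨ TWrite (T j) S P')

/-- The anti-dependence fusion constraint. -/
def AntiDepConstraint {n : ℕ} (T : Fin n → IndexTask Point Idx SId) : Prop :=
  ∀ (i : Fin n) (S : SId) (P : IdxPartition Point Idx), TRead (T i) S P →
    ¬ ∃ (j : Fin n) (P' : IdxPartition Point Idx),
        i < j ∧ P' ≠ P ∧ TWrite (T j) S P'

/-- The reduction fusion constraint. -/
def ReductionConstraint {n : ℕ} (T : Fin n → IndexTask Point Idx SId) : Prop :=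
  ∀ (i : Fin n) (S : SId) (P : IdxPartition Point Idx), TReduce (T i) S P →
    ¬ ∃ (j : Fin n) (P' : IdxPartition Point Idx),
        j ≠ i ∧ (TRead (T j) S P' ∨ TWrite (T j) S P')

/-- A partition is disjoint on a launch domain `D` if it maps distinct points of `D`
to disjoint sub-stores. -/
def DisjointOn (P : IdxPartition Point Idx) (D : Set Point) : Prop :=
  ∀ p ∈ D, ∀ p' ∈ D, p ≠ p' → P p ∩ P p' = ∅

/-- A task sequence is write-non-interfering if every Write access of every task
uses a partition that is disjoint on `D`. -/
def WriteNonInterfering {n : ℕ} (T : Fin n → IndexTask Point Idx SId) (D : Set Point) : Prop :=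
  ∀ (i : Fin n) (S : SId) (P : IdxPartition Point Idx), TWrite (T i) S P → DisjointOn P D

/-- a task sequence satisfying the true-dependence, anti-dependence and
reduction constraints, and which is write-non-interfering, has only point-wise
dependencies: every pair of tasks in it is fusible. -/
theorem fusible_of_fusion_constraints {f : ℕ}
    (T : Fin f → IndexTask Point Idx SId) (D : Set Point)
    (htrue : TrueDepConstraint T) (hanti : AntiDepConstraint T)
    (hred : ReductionConstraint T) (hwni : WriteNonInterfering T D) :
    ∀ i j : Fin f, i < j → ∀ p ∈ D, depMap (T i) (T j) D p ⊆ {p} := by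
  intro i j hij p hp p' hp'
  obtain ⟨hpD, S, P, P', ⟨x, hxP, hxP'⟩, hcase⟩ := hp'
  have hij' : i ≠ j := ne_of_lt hij
  -- helper: if P' = P and P disjoint on D, then p' = p
  have keyeq : ∀ Q : IdxPartition Point Idx, DisjointOn Q D → (Q p ∩ Q p').Nonempty → p' = p := by
    intro Q hQ hne
    by_contra h
    have := hQ p hp p' hpD (fun he => h he.symm)
    rw [this] at hne
    exact hne.ne_empty rfl
  rcases hcase with ⟨hw, hr⟩ | ⟨hr1, hr2⟩ | ⟨hrd, hr⟩
  · -- T_i writes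
    rcases hr with h2 | h2 | h2
    · -- T_j reads
      have hPP : P' = P := by
        by_contra hne
        exact htrue i S P hw ⟨j, P', hij, hne, Or.inl h2⟩
      subst hPP
      exact Set.mem_singleton_iff.mpr (keyeq P' (hwni i S P' hw) ⟨x, hxP, hxP'⟩)
    · have hPP : P' = P := by
        by_contra hne
        exact htrue i S P hw ⟨j, P', hij, hne, Or.inr h2⟩
      subst hPP
      exact Set.mem_singleton_iff.mpr (keyeq P' (hwni i S P' hw) ⟨x, hxP, hxP'⟩)
    · exact (hred j S P' h2 ⟨i, P, hij', Or.inr hw⟩).elim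
  · rcases hr2 with h2 | h2
    · have hPP : P' = P := by
        by_contra hne
        exact hanti i S P hr1 ⟨j, P', hij, hne, h2⟩
      subst hPP
      exact Set.mem_singleton_iff.mpr (keyeq P' (hwni j S P' h2) ⟨x, hxP, hxP'⟩)
    · exact (hred j S P' h2 ⟨i, P, hij', Or.inl hr1⟩).elim
  · exact (hred i S P hrd ⟨j, P', hij'.symm, hr⟩).elim
end

section
/- Let [T₁, …, T_n] be a sequence of index tasks over a common launch domain D satisfying the reduction constraint. Then for all i < j and all p, p' ∈ D, if dep(T_i^p, T_j^{p'}) holds, then it holds via a witness in which neither access carries the Reduce privilege: there exist a store identifier S and partitions P, P' with P p ∩ P' p' ≠ ∅ such that either W(T_i,(S,P)) and (R(T_j,(S,P')) or W(T_j,(S,P'))), or R(T_i,(S,P)) and W(T_j,(S,P')). -/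
variable {Point Idx SId : Type*}

/-- under the reduction constraint, every dependence between point tasks of
tasks in the sequence has a witness in which neither access carries the Reduce privilege. -/
theorem dep_has_reduce_free_witness {n : ℕ}
    (T : Fin n → IndexTask Point Idx SId) (D : Set Point)
    (hred : ReductionConstraint T) :
    ∀ i j : Fin n, i < j → ∀ p ∈ D, ∀ p' ∈ D, dep (T i) (T j) p p' →
      ∃ (S : SId) (P P' : IdxPartition Point Idx),
        (P p ∩ P' p').Nonempty ∧
        ((TWrite (T i) S P ∧ (TRead (T j) S P' ∨ TWrite (T j) S P')) ∨
         (TRead (T i) S P ∧ TWrite (T j) S P')) := by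
  intro i j hij p _ p' _ hdep
  obtain ⟨S, P, P', hne, hcase⟩ := hdep
  have hji : i ≠ j := ne_of_lt hij
  rcases hcase with ⟨hw, hr | hw2 | hrd⟩ | ⟨hr, hw2 | hrd⟩ | ⟨hrd, hrw⟩
  · exact ⟨S, P, P', hne, Or.inl ⟨hw, Or.inl hr⟩⟩
  · exact ⟨S, P, P', hne, Or.inl ⟨hw, Or.inr hw2⟩⟩
  · exact absurd ⟨i, P, hji, Or.inr hw⟩ (hred j S P' hrd)
  · exact ⟨S, P, P', hne, Or.inr ⟨hr, hw2⟩⟩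
  · exact absurd ⟨i, P, hji, Or.inl hr⟩ (hred j S P' hrd)
  · exact absurd ⟨j, P', hji.symm, hrw⟩ (hred i S P hrd)
end

section
/- Let [T₁, …, T_f] be a sequence of index tasks over a common launch domain D satisfying the true-dependence constraint, the anti-dependence constraint, and the reduction constraint, and write-non-interfering. Define the fused schedule order ≺ on pairs (i, p) with 1 ≤ i ≤ f and p ∈ D by (i, p) ≺ (j, p') iff p = p' and i < j (i.e., each fused point task executes the point tasks T₁^p, …, T_f^p sequentially in program order, with different points executing concurrently). Then the fused task preserves all dependencies of [T₁, …, T_f]: for all i < j and all p, p' ∈ D, dep(T_i^p, T_j^{p'}) implies (i, p) ≺ (j, p'). -/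
variable {Point Idx SId : Type*}

/-- the fused task's schedule order `(i, p) ≺ (j, p') ↔ p = p' ∧ i < j`
preserves all dependencies of the fused prefix. -/
theorem fused_task_preserves_dependencies {f : ℕ}
    (T : Fin f → IndexTask Point Idx SId) (D : Set Point)
    (htrue : TrueDepConstraint T) (hanti : AntiDepConstraint T)
    (hred : ReductionConstraint T) (hwni : WriteNonInterfering T D) :
    ∀ i j : Fin f, i < j → ∀ p ∈ D, ∀ p' ∈ D,
      dep (T i) (T j) p p' → (p = p' ∧ i < j) := by
  intro i j hij p hp p' hp' hdep
  refine ⟨?_, hij⟩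
  obtain ⟨S, P, P', hne, hcase⟩ := hdep
  by_contra hpp
  have hij' : i ≠ j := ne_of_lt hij
  rcases hcase with ⟨hW, hR2 | hW2 | hRd2⟩ | ⟨hR, hW2 | hRd2⟩ | ⟨hRd, hRW2⟩
  · -- true-dep, read
    have hPP : P' = P := by
      by_contra h
      exact htrue i S P hW ⟨j, P', hij, h, Or.inl hR2⟩
    subst hPP
    have := hwni i S P' hW p hp p' hp' hpp
    rw [this] at hne
    exact hne.ne_empty rfl
  · -- true-dep, write
    have hPP : P' = P := by
      by_contra h
      exact htrue i S P hW ⟨j, P', hij, h, Or.inr hW2⟩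
    subst hPP
    have := hwni i S P' hW p hp p' hp' hpp
    rw [this] at hne
    exact hne.ne_empty rfl
  · -- true-dep, reduce in T j: contradicts reduction constraint
    exact hred j S P' hRd2 ⟨i, P, hij', Or.inr hW⟩
  · -- anti-dep, write
    have hPP : P' = P := by
      by_contra h
      exact hanti i S P hR ⟨j, P', hij, h, hW2⟩
    subst hPP
    have := hwni j S P' hW2 p hp p' hp' hpp
    rw [this] at hne
    exact hne.ne_empty rfl
  · exact hred j S P' hRd2 ⟨i, P, hij', Or.inl hR⟩
  · exact hred i S P hRd ⟨j, P', hij'.symm, hRW2⟩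
end

section
/- Call an index task T over launch domain D non-interfering if for any two (not necessarily distinct) accesses (S, P, pr) and (S, P', pr') of T to the same store S whose privileges are not both Read and not both Reduce, and for all distinct points p, p' ∈ D, it holds that P p ∩ P' p' = ∅. Let [T₁, …, T_f] be a sequence of index tasks over a common launch domain D satisfying the true-dependence constraint, the anti-dependence constraint, and the reduction constraint, write-non-interfering, and with each T_i individually non-interfering. Then the fused index task F over D whose access set is the union of the access sets of T₁, …, T_f is non-interfering. -/
variable {Point Idx SId : Type*}

/-- An index task is non-interfering if any two of its accesses to the same store whose
privileges are not both Read and not both Reduce touch disjoint sub-stores at distinct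
points of the launch domain. -/
def NonInterfering (T : IndexTask Point Idx SId) (D : Set Point) : Prop :=
  ∀ (S : SId) (P P' : IdxPartition Point Idx) (pr pr' : Priv),
    (S, P, pr) ∈ T → (S, P', pr') ∈ T →
    ¬(pr = Priv.read ∧ pr' = Priv.read) →
    ¬(pr = Priv.reduce ∧ pr' = Priv.reduce) →
    ∀ p ∈ D, ∀ p' ∈ D, p ≠ p' → P p ∩ P' p' = ∅

private lemma aux_lt {f : ℕ} (T : Fin f → IndexTask Point Idx SId) (D : Set Point)
    (htrue : TrueDepConstraint T) (hanti : AntiDepConstraint T)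
    (hred : ReductionConstraint T) (hwni : WriteNonInterfering T D)
    {i j : Fin f} (hij : i < j) {S : SId} {P P' : IdxPartition Point Idx} {pr pr' : Priv}
    (h1 : (S, P, pr) ∈ T i) (h2 : (S, P', pr') ∈ T j)
    (hnr : ¬(pr = Priv.read ∧ pr' = Priv.read))
    (hnd : ¬(pr = Priv.reduce ∧ pr' = Priv.reduce)) :
    ∀ p ∈ D, ∀ p' ∈ D, p ≠ p' → P p ∩ P' p' = ∅ := by
  have Lw : TWrite (T i) S P → (TRead (T j) S P' ∨ TWrite (T j) S P') →
      ∀ p ∈ D, ∀ p' ∈ D, p ≠ p' → P p ∩ P' p' = ∅ := by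
    intro hw hrw
    have hPP : P' = P := by
      by_contra hne'
      exact htrue i S P hw ⟨j, P', hij, hne', hrw⟩
    subst hPP
    exact hwni i S P' hw
  have Lr : TRead (T i) S P → TWrite (T j) S P' →
      ∀ p ∈ D, ∀ p' ∈ D, p ≠ p' → P p ∩ P' p' = ∅ := by
    intro hr hw
    have hPP : P' = P := by
      by_contra hne'
      exact hanti i S P hr ⟨j, P', hij, hne', hw⟩
    subst hPP
    exact hwni j S P' hw
  have Ldi : TReduce (T i) S P → (TRead (T j) S P' ∨ TWrite (T j) S P') → False :=
    fun hd hrw => hred i S P hd ⟨j, P', hij.ne', hrw⟩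
  have Ldj : TReduce (T j) S P' → (TRead (T i) S P ∨ TWrite (T i) S P) → False :=
    fun hd hrw => hred j S P' hd ⟨i, P, hij.ne, hrw⟩
  cases pr <;> cases pr'
  · exact absurd ⟨rfl, rfl⟩ hnr
  · exact Lr (Or.inl h1) (Or.inl h2)
  · exact absurd (Ldj h2 (Or.inl (Or.inl h1))) not_false
  · exact Lr (Or.inl h1) (Or.inr h2)
  · exact Lw (Or.inl h1) (Or.inl (Or.inl h2))
  · exact Lw (Or.inl h1) (Or.inr (Or.inl h2))
  · exact absurd (Ldj h2 (Or.inr (Or.inl h1))) not_false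
  · exact Lw (Or.inl h1) (Or.inr (Or.inr h2))
  · exact absurd (Ldi h1 (Or.inl (Or.inl h2))) not_false
  · exact absurd (Ldi h1 (Or.inr (Or.inl h2))) not_false
  · exact absurd ⟨rfl, rfl⟩ hnd
  · exact absurd (Ldi h1 (Or.inl (Or.inr h2))) not_false
  · exact Lw (Or.inr h1) (Or.inl (Or.inl h2))
  · exact Lw (Or.inr h1) (Or.inr (Or.inl h2))
  · exact absurd (Ldj h2 (Or.inr (Or.inr h1))) not_false
  · exact Lw (Or.inr h1) (Or.inr (Or.inr h2))

/-- the fused task, whose access set is the union of the access sets of a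
fusible prefix of individually non-interfering tasks, is itself non-interfering. -/
theorem fused_task_nonInterfering {f : ℕ}
    (T : Fin f → IndexTask Point Idx SId) (D : Set Point)
    (htrue : TrueDepConstraint T) (hanti : AntiDepConstraint T)
    (hred : ReductionConstraint T) (hwni : WriteNonInterfering T D)
    (hni : ∀ i : Fin f, NonInterfering (T i) D) :
    NonInterfering (⋃ i : Fin f, T i) D := by
  intro S P P' pr pr' h1 h2 hnr hnd p hp p' hp' hpp
  simp only [Set.mem_iUnion] at h1 h2
  obtain ⟨i, h1⟩ := h1
  obtain ⟨j, h2⟩ := h2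
  rcases lt_trichotomy i j with hij | hij | hij
  · exact aux_lt T D htrue hanti hred hwni hij h1 h2 hnr hnd p hp p' hp' hpp
  · subst hij
    exact hni i S P P' pr pr' h1 h2 hnr hnd p hp p' hp' hpp
  · have := aux_lt T D htrue hanti hred hwni hij h2 h1
      (fun ⟨a, b⟩ => hnr ⟨b, a⟩) (fun ⟨a, b⟩ => hnd ⟨b, a⟩) p' hp' p hp hpp.symm
    rw [Set.inter_comm]
    exact this
end
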